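/- arXiv:2312.07119 — 2 statements merged into one kernel-verified Lean document; each statement's English description precedes it below -/
import Mathlib

section
/- Let λ ≠ 0, F ∈ O_2, and let G ∈ O_2 be the unique series with (λI + F)∘(λ^{-1}I + G) = I. If there exist r > 0 and α ∈ (0,1) with F^(r) ≤ |λ|αr, then G^(|λ|(1−α)r) ≤ αr. -/
open scoped ENNReal

noncomputable def pcoeff (f : PowerSeries ℂ) (k : ℕ) : ℂ := PowerSeries.coeff k f

/-- Composition of formal power series: (f∘g)_m = Σ_{k=0}^m f_k (g^k)_m. -/
noncomputable def pcomp (f g : PowerSeries ℂ) : PowerSeries ℂ :=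
  PowerSeries.mk fun m => ∑ k ∈ Finset.range (m + 1), pcoeff f k * pcoeff (g ^ k) m

/-- f ∈ O_m : the first m coefficients vanish. -/
def inO (m : ℕ) (f : PowerSeries ℂ) : Prop := ∀ i < m, pcoeff f i = 0

/-- Truncation [f]_d = f_0 + f_1 z + ... + f_d z^d, as a power series. -/
noncomputable def ptrunc (d : ℕ) (f : PowerSeries ℂ) : PowerSeries ℂ :=
  PowerSeries.mk fun k => if k ≤ d then pcoeff f k else 0

/-- Majorant evaluation f^(r) = Σ |f_k| r^k ∈ [0,∞]. -/
noncomputable def maj (f : PowerSeries ℂ) (r : ℝ≥0∞) : ℝ≥0∞ :=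
  ∑' k, (‖pcoeff f k‖₊ : ℝ≥0∞) * r ^ k

/-- Evaluation of a power series at a point. -/
noncomputable def peval (f : PowerSeries ℂ) (z : ℂ) : ℂ := ∑' k, pcoeff f k * z ^ k

/-- f has positive radius of convergence. -/
def posRadius (f : PowerSeries ℂ) : Prop :=
  ∃ r : ℝ, 0 < r ∧ Summable fun k => ‖pcoeff f k‖ * r ^ k

/-- The operator L_λ(H) = H∘(λI) − λH. -/
noncomputable def Lop (l : ℂ) (H : PowerSeries ℂ) : PowerSeries ℂ :=
  pcomp H (l • PowerSeries.X) - l • H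

/-! Put `H = λ⁻¹I + G` and `s = |λ|(1-α)r`. Comparing coefficients in `(λI + F)∘H = I` gives
`λ G_m = -(F∘H)_m` for `m ≥ 2`, and since `F ∈ O_2` and `H ∈ O_1`, this coefficient only involves
`H_0, …, H_{m-1}`, so `H` may be replaced by its truncation `[H]_{m-1}`. Majorants are
submultiplicative, hence `(F∘K)^ ≤ F^∘K^`, and by induction on `d`,
`|λ| [G]_{d+1}^(s) ≤ F^([H]_d^(s)) ≤ F^(r) ≤ |λ|αr`, because
`[H]_d^(s) ≤ |λ|⁻¹s + [G]_d^(s) ≤ (1-α)r + αr = r`. -/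

open PowerSeries Finset

lemma pow_dvd_pow_succ_sub_pow_succ {R : Type*} [CommRing R] {x a b : R} (ha : x ∣ a) (hb : x ∣ b)
    {n : ℕ} (hab : x ^ n ∣ a - b) (k : ℕ) : x ^ (n + k) ∣ a ^ (k + 1) - b ^ (k + 1) := by
  rw [← geom_sum₂_mul, pow_add, mul_comm (x ^ n)]
  refine mul_dvd_mul (dvd_sum fun i hi => ?_) hab
  have hi : i ≤ k := Nat.lt_succ_iff.mp (mem_range.mp hi)
  rw [Nat.add_sub_cancel, show k = i + (k - i) by omega, pow_add, Nat.add_sub_cancel_left]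
  exact mul_dvd_mul (pow_dvd_pow_of_dvd ha i) (pow_dvd_pow_of_dvd hb _)

lemma inO_iff_X_pow_dvd {m : ℕ} {f : PowerSeries ℂ} : inO m f ↔ X ^ m ∣ f :=
  X_pow_dvd_iff.symm

lemma inO.mono {m n : ℕ} {f : PowerSeries ℂ} (hf : inO m f) (h : n ≤ m) : inO n f :=
  fun i hi => hf i (hi.trans_le h)

lemma coeff_ptrunc (d k : ℕ) (f : PowerSeries ℂ) :
    coeff k (ptrunc d f) = if k ≤ d then coeff k f else 0 :=
  coeff_mk _ _

lemma ptrunc_add (d : ℕ) (f g : PowerSeries ℂ) : ptrunc d (f + g) = ptrunc d f + ptrunc d g := by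
  ext k
  simp only [map_add, coeff_ptrunc]
  split_ifs <;> simp

lemma ptrunc_eq_zero {d : ℕ} {f : PowerSeries ℂ} (hf : inO (d + 1) f) : ptrunc d f = 0 := by
  ext k
  rw [coeff_ptrunc]
  split_ifs with hk
  · exact hf k (Nat.lt_succ_of_le hk)
  · rfl

lemma inO_sub_ptrunc (d : ℕ) (f : PowerSeries ℂ) : inO (d + 1) (f - ptrunc d f) := by
  intro k hk
  simp [pcoeff, coeff_ptrunc, Nat.le_of_lt_succ hk]

lemma inO.ptrunc {d : ℕ} {f : PowerSeries ℂ} (hf : inO 1 f) : inO 1 (ptrunc d f) := by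
  intro k hk
  simp only [pcoeff, coeff_ptrunc]
  split_ifs
  · exact hf k hk
  · rfl

lemma pcoeff_pow_ptrunc {g : PowerSeries ℂ} (hg : inO 1 g) {d k m : ℕ} (hk : 2 ≤ k)
    (hm : m ≤ d + 1) : pcoeff (g ^ k) m = pcoeff (ptrunc d g ^ k) m := by
  obtain ⟨j, rfl⟩ : ∃ j, k = j + 1 + 1 := ⟨k - 2, by omega⟩
  have hdvd : inO (d + 1 + (j + 1)) (g ^ (j + 1 + 1) - ptrunc d g ^ (j + 1 + 1)) := by
    rw [inO_iff_X_pow_dvd]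
    refine pow_dvd_pow_succ_sub_pow_succ ?_ ?_ ?_ _
    · simpa [inO_iff_X_pow_dvd] using hg
    · simpa [inO_iff_X_pow_dvd] using hg.ptrunc
    · exact inO_iff_X_pow_dvd.mp (inO_sub_ptrunc d g)
  exact sub_eq_zero.mp (by simpa [pcoeff] using hdvd m (by omega))

lemma pcomp_add_left (f₁ f₂ g : PowerSeries ℂ) : pcomp (f₁ + f₂) g = pcomp f₁ g + pcomp f₂ g := by
  ext m
  simp [pcomp, pcoeff, add_mul, sum_add_distrib]

lemma pcomp_smul_X_left (c : ℂ) {g : PowerSeries ℂ} (hg : inO 1 g) : pcomp (c • X) g = c • g := by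
  ext m
  rcases Nat.eq_zero_or_pos m with rfl | hm
  · simp [pcomp, pcoeff, show coeff 0 g = 0 from hg 0 one_pos]
  · simp [pcomp, pcoeff, coeff_X, ite_mul, sum_ite_eq', hm]

lemma pcoeff_pcomp_ptrunc {f g : PowerSeries ℂ} (hf : inO 2 f) (hg : inO 1 g) {d m : ℕ}
    (hm : m ≤ d + 1) : pcoeff (pcomp f g) m = pcoeff (pcomp f (ptrunc d g)) m := by
  simp only [pcomp, pcoeff, coeff_mk]
  refine sum_congr rfl fun k _ => ?_
  rcases lt_or_ge k 2 with hk | hk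
  · simp [show coeff k f = 0 from hf k hk]
  · exact congrArg _ (pcoeff_pow_ptrunc hg hk hm)

lemma maj_mono (f : PowerSeries ℂ) : Monotone (maj f) :=
  fun _ _ h => ENNReal.tsum_le_tsum fun _ => by gcongr

lemma maj_add_le (f g : PowerSeries ℂ) (s : ℝ≥0∞) : maj (f + g) s ≤ maj f s + maj g s := by
  rw [maj, maj, maj, ← ENNReal.tsum_add]
  refine ENNReal.tsum_le_tsum fun k => ?_
  rw [← add_mul]
  gcongr
  exact_mod_cast nnnorm_add_le _ _

lemma maj_smul_X (c : ℂ) (s : ℝ≥0∞) : maj (c • X) s = ‖c‖₊ * s := by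
  rw [maj, tsum_eq_single 1 fun k hk => by simp [pcoeff, coeff_X, hk]]
  simp [pcoeff]

lemma maj_one_le (s : ℝ≥0∞) : maj 1 s ≤ 1 := by
  rw [maj, tsum_eq_single 0 fun k hk => by simp [pcoeff, coeff_one, hk]]
  simp [pcoeff]

lemma ENNReal.tsum_mul_tsum_eq_tsum_sum_antidiagonal {A : Type*} [AddMonoid A] [HasAntidiagonal A]
    (f g : A → ℝ≥0∞) :
    (∑' n, f n) * ∑' n, g n = ∑' n, ∑ kl ∈ antidiagonal n, f kl.1 * g kl.2 := by
  simp_rw [← ENNReal.tsum_mul_right, ← ENNReal.tsum_mul_left]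
  rw [← ENNReal.tsum_prod, ← HasAntidiagonal.sigmaAntidiagonalEquivProd.tsum_eq, ENNReal.tsum_sigma']
  refine tsum_congr fun n => ?_
  rw [← Finset.tsum_subtype]
  rfl

lemma maj_mul_le (f g : PowerSeries ℂ) (s : ℝ≥0∞) : maj (f * g) s ≤ maj f s * maj g s := by
  rw [maj, maj, maj, ENNReal.tsum_mul_tsum_eq_tsum_sum_antidiagonal]
  refine ENNReal.tsum_le_tsum fun m => ?_
  calc (‖pcoeff (f * g) m‖₊ : ℝ≥0∞) * s ^ m
      ≤ (∑ p ∈ antidiagonal m, (‖pcoeff f p.1‖₊ * ‖pcoeff g p.2‖₊ : ℝ≥0∞)) * s ^ m := by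
        gcongr
        simp only [pcoeff, coeff_mul, ← ENNReal.coe_mul, ← nnnorm_mul]
        exact_mod_cast nnnorm_sum_le _ _
    _ = _ := by
        rw [sum_mul]
        refine sum_congr rfl fun p hp => ?_
        rw [← mem_antidiagonal.mp hp, pow_add]
        ring

lemma maj_pow_le (f : PowerSeries ℂ) (s : ℝ≥0∞) (k : ℕ) : maj (f ^ k) s ≤ maj f s ^ k := by
  induction k with
  | zero => simpa using maj_one_le s
  | succ k ih =>
    rw [pow_succ, pow_succ]
    exact (maj_mul_le _ _ _).trans (by gcongr)

lemma maj_pcomp_le (f g : PowerSeries ℂ) (s : ℝ≥0∞) : maj (pcomp f g) s ≤ maj f (maj g s) :=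
  calc maj (pcomp f g) s
      ≤ ∑' m, ∑' k, (‖pcoeff f k‖₊ : ℝ≥0∞) * (‖pcoeff (g ^ k) m‖₊ * s ^ m) := by
        refine ENNReal.tsum_le_tsum fun m => ?_
        simp_rw [← mul_assoc, ENNReal.tsum_mul_right]
        gcongr
        calc (‖pcoeff (pcomp f g) m‖₊ : ℝ≥0∞)
            ≤ ∑ k ∈ range (m + 1), (‖pcoeff f k‖₊ * ‖pcoeff (g ^ k) m‖₊ : ℝ≥0∞) := by
              simp only [pcomp, pcoeff, coeff_mk, ← ENNReal.coe_mul, ← nnnorm_mul]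
              exact_mod_cast nnnorm_sum_le _ _
          _ ≤ _ := ENNReal.sum_le_tsum _
    _ = ∑' k, (‖pcoeff f k‖₊ : ℝ≥0∞) * maj (g ^ k) s := by
        rw [ENNReal.tsum_comm]
        simp_rw [ENNReal.tsum_mul_left, maj]
    _ ≤ maj f (maj g s) := ENNReal.tsum_le_tsum fun k => by gcongr; exact maj_pow_le g s k

lemma maj_ptrunc_le (d : ℕ) (f : PowerSeries ℂ) (s : ℝ≥0∞) : maj (ptrunc d f) s ≤ maj f s := by
  refine ENNReal.tsum_le_tsum fun k => ?_
  simp only [pcoeff, coeff_ptrunc]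
  split_ifs <;> simp

lemma maj_ptrunc_add_le (d : ℕ) (f g : PowerSeries ℂ) (s : ℝ≥0∞) :
    maj (ptrunc d (f + g)) s ≤ maj f s + maj (ptrunc d g) s := by
  rw [ptrunc_add]
  exact (maj_add_le _ _ s).trans (by gcongr; exact maj_ptrunc_le d f s)

lemma iSup_maj_ptrunc (f : PowerSeries ℂ) (s : ℝ≥0∞) : ⨆ d, maj (ptrunc d f) s = maj f s := by
  rw [maj, ENNReal.tsum_eq_iSup_nat' (Filter.tendsto_add_atTop_nat 1)]
  refine iSup_congr fun d => ?_
  rw [maj, tsum_eq_sum (s := range (d + 1)) fun k hk => by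
    simp [pcoeff, coeff_ptrunc, show ¬k ≤ d by simpa [Nat.lt_succ_iff] using hk]]
  refine sum_congr rfl fun k hk => ?_
  simp [pcoeff, coeff_ptrunc, Nat.lt_succ_iff.mp (mem_range.mp hk)]

section Inverse

variable {l : ℂ} {F G : PowerSeries ℂ}

lemma inO.smul_X_add (c : ℂ) (hG : inO 1 G) : inO 1 (c • X + G) := by
  intro k hk
  obtain rfl := Nat.lt_one_iff.mp hk
  simpa [pcoeff] using hG 0 hk

lemma mul_pcoeff_of_pcomp_eq_X (hG : inO 2 G) (hinv : pcomp (l • X + F) (l⁻¹ • X + G) = X)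
    {m : ℕ} (hm : 2 ≤ m) : l * pcoeff G m = -pcoeff (pcomp F (l⁻¹ • X + G)) m := by
  rw [pcomp_add_left, pcomp_smul_X_left l ((hG.mono one_le_two).smul_X_add _)] at hinv
  have hm' := congrArg (coeff m) hinv
  simp only [map_add, coeff_smul, coeff_X, if_neg (show m ≠ 1 by omega)] at hm'
  simp only [pcoeff]
  linear_combination hm'

lemma nnnorm_mul_maj_ptrunc_succ_le (hF : inO 2 F) (hG : inO 2 G)
    (hinv : pcomp (l • X + F) (l⁻¹ • X + G) = X) (d : ℕ) (s : ℝ≥0∞) :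
    ‖l‖₊ * maj (ptrunc (d + 1) G) s ≤ maj F (maj (ptrunc d (l⁻¹ • X + G)) s) := by
  refine le_trans ?_ (maj_pcomp_le F _ s)
  rw [maj, maj, ← ENNReal.tsum_mul_left]
  refine ENNReal.tsum_le_tsum fun m => ?_
  rw [← mul_assoc, ← ENNReal.coe_mul, ← nnnorm_mul]
  gcongr
  rw [pcoeff, coeff_ptrunc]
  split_ifs with hmd
  · rcases lt_or_ge m 2 with hm | hm
    · simp [show coeff m G = 0 from hG m hm]
    · rw [← pcoeff, mul_pcoeff_of_pcomp_eq_X hG hinv hm, nnnorm_neg,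
        pcoeff_pcomp_ptrunc hF ((hG.mono one_le_two).smul_X_add _) hmd]
  · simp

end Inverse

theorem inverse_series_maj (l : ℂ) (hl : l ≠ 0) (F G : PowerSeries ℂ)
    (hF : inO 2 F) (hG : inO 2 G)
    (hinv : pcomp (l • PowerSeries.X + F) (l⁻¹ • PowerSeries.X + G) = PowerSeries.X)
    (r α : ℝ) (hr : 0 < r) (hα0 : 0 < α) (hα1 : α < 1)
    (hmaj : maj F (ENNReal.ofReal r) ≤ ENNReal.ofReal (‖l‖ * α * r)) :
    maj G (ENNReal.ofReal (‖l‖ * (1 - α) * r)) ≤ ENNReal.ofReal (α * r) := by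
  set s := ENNReal.ofReal (‖l‖ * (1 - α) * r)
  have hl' : (‖l‖₊ : ℝ≥0∞) ≠ 0 := by simpa using hl
  have hlinear : maj (l⁻¹ • X) s = ENNReal.ofReal ((1 - α) * r) := by
    rw [maj_smul_X, ← ENNReal.ofReal_coe_nnreal, coe_nnnorm, ← ENNReal.ofReal_mul (norm_nonneg _),
      norm_inv, ← mul_assoc, ← mul_assoc, inv_mul_cancel₀ (norm_ne_zero_iff.mpr hl), one_mul]
  have hmaj' : maj F (ENNReal.ofReal r) ≤ ‖l‖₊ * ENNReal.ofReal (α * r) := by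
    rwa [mul_assoc, ENNReal.ofReal_mul (norm_nonneg _), ← coe_nnnorm,
      ENNReal.ofReal_coe_nnreal] at hmaj
  have htrunc : ∀ d, maj (ptrunc d G) s ≤ ENNReal.ofReal (α * r) := by
    intro d
    induction d with
    | zero => simp [ptrunc_eq_zero (hG.mono one_le_two), maj, pcoeff]
    | succ d ih =>
      have hH : maj (ptrunc d (l⁻¹ • X + G)) s ≤ ENNReal.ofReal r :=
        calc maj (ptrunc d (l⁻¹ • X + G)) s
            ≤ maj (l⁻¹ • X) s + maj (ptrunc d G) s := maj_ptrunc_add_le d _ G s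
          _ ≤ ENNReal.ofReal ((1 - α) * r) + ENNReal.ofReal (α * r) := by rw [hlinear]; gcongr
          _ = ENNReal.ofReal r := by
              rw [← ENNReal.ofReal_add (by nlinarith) (by positivity)]
              ring_nf
      refine (ENNReal.mul_le_mul_iff_right hl' ENNReal.coe_ne_top).mp ?_
      exact (nnnorm_mul_maj_ptrunc_succ_le hF hG hinv d s).trans ((maj_mono F hH).trans hmaj')
  rw [← iSup_maj_ptrunc]
  exact iSup_le htrunc
end

section
/- Let λ be not a root of unity, Ω_n = min_{1≤ℓ≤n}|λ^ℓ − 1|, and F_k ∈ O_{1+2^k} a formal series. Then the polynomial P_k = [L_λ^{-1}F_k]_{2^{k+1}} satisfies the majorant bound P_k^(r) ≤ Ω_{2^{k+1}}^{-1} · F_k^(r) for all r ≥ 0. -/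
/-! The coefficients of the truncation are `F_i / (l ^ i - l)` for `i ≤ 2 ^ (k + 1)`, and
`|l ^ i - l| = |l ^ (i - 1) - 1| ≥ Ω` when `|l| = 1` and `i ≥ 2` (at `i = 0`, `|1 - l| ≥ Ω`).
So the majorant series is dominated coefficientwise by `Ω⁻¹ · F^`. -/

open scoped ENNReal

section

variable {𝕜 : Type*} [NormedDivisionRing 𝕜]

lemma enorm_div_le_inv_mul {a b : 𝕜} {c : ℝ≥0∞} (h : b ≠ 0 → c ≤ ‖b‖ₑ) :
    ‖a / b‖ₑ ≤ c⁻¹ * ‖a‖ₑ := by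
  rcases eq_or_ne b 0 with rfl | hb
  · simp
  rw [div_eq_mul_inv, enorm_mul, enorm_inv hb, mul_comm]
  gcongr
  exact h hb

lemma norm_pow_succ_sub_self {l : 𝕜} (hl : ‖l‖ = 1) (i : ℕ) :
    ‖l ^ (i + 1) - l‖ = ‖l ^ i - 1‖ := by
  rw [pow_succ, ← sub_one_mul, norm_mul, hl, mul_one]

lemma sInf_norm_pow_sub_one_le (l : 𝕜) {n ℓ : ℕ} (h1 : 1 ≤ ℓ) (hn : ℓ ≤ n) :
    sInf {x : ℝ | ∃ ℓ : ℕ, 1 ≤ ℓ ∧ ℓ ≤ n ∧ x = ‖l ^ ℓ - 1‖} ≤ ‖l ^ ℓ - 1‖ :=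
  csInf_le ⟨0, by rintro _ ⟨_, -, -, rfl⟩; exact norm_nonneg _⟩ ⟨ℓ, h1, hn, rfl⟩

lemma sInf_norm_pow_sub_one_le_norm_pow_sub_self {l : 𝕜} (hl : ‖l‖ = 1) {n i : ℕ}
    (hn : 1 ≤ n) (hin : i ≤ n) (hi : i ≠ 1) :
    sInf {x : ℝ | ∃ ℓ : ℕ, 1 ≤ ℓ ∧ ℓ ≤ n ∧ x = ‖l ^ ℓ - 1‖} ≤ ‖l ^ i - l‖ := by
  match i, hi with
  | 0, _ => simpa [norm_sub_rev] using sInf_norm_pow_sub_one_le l le_rfl hn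
  | j + 2, _ =>
    rw [norm_pow_succ_sub_self hl]
    exact sInf_norm_pow_sub_one_le l (by omega) (by omega)

end

lemma maj_le_mul_of_enorm_coeff_le {f g : PowerSeries ℂ} {c : ℝ≥0∞}
    (h : ∀ i, ‖pcoeff g i‖ₑ ≤ c * ‖pcoeff f i‖ₑ) (r : ℝ≥0∞) : maj g r ≤ c * maj f r := by
  rw [maj, maj, ← ENNReal.tsum_mul_left]
  refine ENNReal.tsum_le_tsum fun i => ?_
  rw [← mul_assoc]
  gcongr
  exact h i

lemma pcoeff_mk (f : ℕ → ℂ) (i : ℕ) : pcoeff (PowerSeries.mk f) i = f i :=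
  PowerSeries.coeff_mk _ _

lemma pcoeff_ptrunc (d : ℕ) (f : PowerSeries ℂ) (i : ℕ) :
    pcoeff (ptrunc d f) i = if i ≤ d then pcoeff f i else 0 :=
  pcoeff_mk _ _

theorem Pk_maj_bound_general (l : ℂ) (hl : ‖l‖ = 1)
    (k : ℕ) (F : PowerSeries ℂ)
    (Ω : ℝ)
    (hΩ : Ω = sInf {x : ℝ | ∃ ℓ : ℕ, 1 ≤ ℓ ∧ ℓ ≤ 2 ^ (k + 1) ∧
      x = ‖l ^ ℓ - 1‖}) :
    ∀ r : ℝ≥0∞,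
      maj (ptrunc (2 ^ (k + 1)) (PowerSeries.mk fun i => pcoeff F i / (l ^ i - l))) r
        ≤ (ENNReal.ofReal Ω)⁻¹ * maj F r := by
  refine maj_le_mul_of_enorm_coeff_le fun i => ?_
  rw [pcoeff_ptrunc, pcoeff_mk]
  split_ifs with hi
  · -- at `i = 1` the divisor vanishes and the coefficient is the junk value `F₁ / 0 = 0`
    refine enorm_div_le_inv_mul fun hne => ?_
    have hi1 : i ≠ 1 := by rintro rfl; simp at hne
    rw [← ofReal_norm, hΩ]
    exact ENNReal.ofReal_le_ofReal <|
      sInf_norm_pow_sub_one_le_norm_pow_sub_self hl Nat.one_le_two_pow hi hi1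
  · simp

theorem Pk_maj_bound (l : ℂ) (hl : ‖l‖ = 1)
    (hroot : ∀ n : ℕ, 1 ≤ n → l ^ n ≠ 1) (k : ℕ) (F : PowerSeries ℂ)
    (hF : inO (1 + 2 ^ k) F) (Ω : ℝ)
    (hΩ : Ω = sInf {x : ℝ | ∃ ℓ : ℕ, 1 ≤ ℓ ∧ ℓ ≤ 2 ^ (k + 1) ∧
      x = ‖l ^ ℓ - 1‖}) :
    ∀ r : ℝ≥0∞,
      maj (ptrunc (2 ^ (k + 1)) (PowerSeries.mk fun i => pcoeff F i / (l ^ i - l))) r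
        ≤ (ENNReal.ofReal Ω)⁻¹ * maj F r :=
  Pk_maj_bound_general l hl k F Ω hΩ
end
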